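/- For n ≥ 6, the subgroup of B_n generated by all elements σ_iσ_j^{−1} with 1 ≤ i, j ≤ n−1 is normal in B_n, and hence equals the commutator subgroup B_n'. -/

import Mathlib

/-- Artin braid relators for the braid group on `n` strands, with generators
`FreeGroup.of i` corresponding to `σ_{i+1}` for `i : Fin (n-1)`. -/
def braidRels (n : ℕ) : Set (FreeGroup (Fin (n - 1))) :=
  {r | ∃ i j : Fin (n - 1),
      ((j : ℕ) ≥ (i : ℕ) + 2 ∧
        r = FreeGroup.of i * FreeGroup.of j * (FreeGroup.of i)⁻¹ * (FreeGroup.of j)⁻¹) ∨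
      ((j : ℕ) = (i : ℕ) + 1 ∧
        r = FreeGroup.of i * FreeGroup.of j * FreeGroup.of i *
          (FreeGroup.of j * FreeGroup.of i * FreeGroup.of j)⁻¹)}

/-- The braid group on `n` strands. -/
def BraidGroup (n : ℕ) : Type := PresentedGroup (braidRels n)

instance (n : ℕ) : Group (BraidGroup n) :=
  inferInstanceAs (Group (PresentedGroup (braidRels n)))

/-- The Artin generator `σ_i` of `BraidGroup n`, for `1 ≤ i ≤ n-1` (junk value `1` otherwise). -/
def σ {n : ℕ} (i : ℕ) : BraidGroup n :=
  if h : 1 ≤ i ∧ i < n then PresentedGroup.of (⟨i - 1, by omega⟩ : Fin (n - 1)) else 1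

/-- The element `α = σ_1 σ_2 ⋯ σ_{n-1}`. -/
def α (n : ℕ) : BraidGroup n := ((List.range (n - 1)).map (fun i => σ (i + 1))).prod

/-- The half-twist `σ_j` for an index `j` taken modulo `n`, defined by conjugating
`σ_1` by the rotation `α`: `σ_{1+m} = α^m σ_1 α^{-m}`. -/
def σm {n : ℕ} (j : ℤ) : BraidGroup n := (α n) ^ (j - 1) * σ 1 * (α n) ^ (1 - j)

/-!
Let `S` be the set of Artin generators and `H` the subgroup generated by the quotients `a / b`
with `a, b ∈ S`. Since `S ⊆ H σ₁`, the braid group is generated by `H` and `σ₁`, so `H` is normal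
as soon as `σ₁` normalizes it, that is, as soon as conjugation by `σ₁` and by `σ₁⁻¹` maps every
generator into the coset `H σ₁`. This is clear for the generators commuting with `σ₁`. For `σ₂` it
follows from the braid relation and from `σ₄`, which commutes with both `σ₁` and `σ₂`:
`σ₁⁻¹ σ₂ = (σ₄ σ₁⁻¹)(σ₂ σ₄⁻¹) ∈ H`. The quotient by `H` is then cyclic, generated by the image of
`σ₁`, so `H` contains the commutator subgroup; conversely all generators have the same image in the
abelianization, so `H` lies in the commutator subgroup.
-/

open Pointwise

namespace Subgroup

variable {G : Type*} [Group G]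

theorem mem_normalizer_closure_of_conj_mem {s : Set G} {c : G}
    (h₁ : ∀ g ∈ s, c * g * c⁻¹ ∈ closure s) (h₂ : ∀ g ∈ s, c⁻¹ * g * c ∈ closure s) :
    c ∈ normalizer (closure s : Set G) := by
  rw [mem_normalizer_iff_map_conj_eq, MonoidHom.map_closure]
  refine le_antisymm ((closure_le _).2 ?_) ((closure_le _).2 fun g hg => ?_)
  · rintro _ ⟨g, hg, rfl⟩
    exact h₁ g hg
  · rw [← MonoidHom.map_closure]
    exact ⟨_, h₂ g hg, by simp [mul_assoc]⟩

variable {S : Set G}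

theorem div_mem_closure_div_self {a b : G} (ha : a ∈ S) (hb : b ∈ S) : a / b ∈ closure (S / S) :=
  subset_closure (Set.div_mem_div ha hb)

theorem inv_mul_mem_closure_div_self_of_commute {a b t : G} (ha : a ∈ S) (hb : b ∈ S) (ht : t ∈ S)
    (hta : Commute t a) (htb : Commute t b) : a⁻¹ * b ∈ closure (S / S) := by
  have h : a⁻¹ * b = t / a * (b / t) := by
    rw [div_eq_mul_inv, div_eq_mul_inv, hta.inv_right.eq, ← htb.inv_left.eq]
    group
  rw [h]
  exact mul_mem (div_mem_closure_div_self ht ha) (div_mem_closure_div_self hb ht)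

theorem conj_div_mem_closure_div_self_of_braid {a b t : G} (ha : a ∈ S) (hb : b ∈ S) (ht : t ∈ S)
    (hta : Commute t a) (htb : Commute t b) (hab : a * b * a = b * a * b) :
    a * b * a⁻¹ / a ∈ closure (S / S) := by
  have h : a * b * a⁻¹ / a = b⁻¹ * a * (b / a) :=
    calc a * b * a⁻¹ / a = b⁻¹ * (b * a * b) * a⁻¹ * a⁻¹ := by simp only [div_eq_mul_inv]; group
      _ = b⁻¹ * (a * b * a) * a⁻¹ * a⁻¹ := by rw [hab]
      _ = b⁻¹ * a * (b / a) := by simp only [div_eq_mul_inv]; group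
  rw [h]
  exact mul_mem (inv_mul_mem_closure_div_self_of_commute hb ha ht htb hta)
    (div_mem_closure_div_self hb ha)

theorem closure_div_self_normal {c : G} (hS : closure S = ⊤) (hc : c ∈ S)
    (h₁ : ∀ a ∈ S, c * a * c⁻¹ / c ∈ closure (S / S)) (h₂ : ∀ a ∈ S, c⁻¹ * a ∈ closure (S / S)) :
    (closure (S / S)).Normal := by
  have hcN : c ∈ normalizer (closure (S / S) : Set G) := by
    refine mem_normalizer_closure_of_conj_mem ?_ ?_ <;> rintro _ ⟨a, ha, b, hb, rfl⟩
    · have h : c * (a / b) * c⁻¹ = (c * a * c⁻¹ / c) / (c * b * c⁻¹ / c) := by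
        simp only [div_eq_mul_inv]; group
      rw [h]
      exact div_mem (h₁ a ha) (h₁ b hb)
    · have h : c⁻¹ * (a / b) * c = (c⁻¹ * a) / (c⁻¹ * b) := by
        simp only [div_eq_mul_inv]; group
      rw [h]
      exact div_mem (h₂ a ha) (h₂ b hb)
  rw [← normalizer_eq_top_iff, eq_top_iff, ← hS, closure_le]
  intro a ha
  rw [← div_mul_cancel a c]
  exact mul_mem (le_normalizer (div_mem_closure_div_self ha hc)) hcN

theorem commutator_le_closure_div_self {c : G} (hS : closure S = ⊤) (hc : c ∈ S)
    [(closure (S / S)).Normal] : _root_.commutator G ≤ closure (S / S) := by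
  refine Normal.commutator_le_of_self_sup_commutative_eq_top (H := zpowers c) ?_ inferInstance
  rw [eq_top_iff, ← hS, closure_le]
  intro a ha
  rw [← div_mul_cancel a c]
  exact mul_mem (mem_sup_left (div_mem_closure_div_self ha hc)) (mem_sup_right (mem_zpowers c))

theorem closure_div_self_le_commutator
    (hS : ∀ a ∈ S, ∀ b ∈ S, Abelianization.of a = Abelianization.of b) :
    closure (S / S) ≤ _root_.commutator G := by
  rw [closure_le]
  rintro _ ⟨a, ha, b, hb, rfl⟩
  rw [SetLike.mem_coe, ← Abelianization.ker_of, MonoidHom.mem_ker, map_div, hS a ha b hb,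
    div_self']

end Subgroup

namespace BraidGroup

open Subgroup

variable {n : ℕ}

theorem σ_eq_of {i : ℕ} (hi : 1 ≤ i) (hin : i < n) :
    (σ i : BraidGroup n) = PresentedGroup.of (⟨i - 1, by omega⟩ : Fin (n - 1)) :=
  dif_pos ⟨hi, hin⟩

theorem commute_σ {i j : ℕ} (hi : 1 ≤ i) (hij : i + 2 ≤ j) (hjn : j < n) :
    Commute (σ i : BraidGroup n) (σ j) := by
  rw [σ_eq_of hi (by omega), σ_eq_of (by omega) hjn]
  refine PresentedGroup.mk_eq_mk_of_mul_inv_mem (x := .of _ * .of _) (y := .of _ * .of _) ?_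
  exact ⟨⟨i - 1, by omega⟩, ⟨j - 1, by omega⟩, Or.inl ⟨by simp only; omega, by group⟩⟩

theorem σ_braid {i : ℕ} (hi : 1 ≤ i) (hin : i + 1 < n) :
    (σ i : BraidGroup n) * σ (i + 1) * σ i = σ (i + 1) * σ i * σ (i + 1) := by
  rw [σ_eq_of hi (by omega), σ_eq_of (by omega) hin]
  exact PresentedGroup.mk_eq_mk_of_mul_inv_mem ⟨_, _, Or.inr ⟨by simp only; omega, rfl⟩⟩

def artinGenerators (n : ℕ) : Set (BraidGroup n) := σ '' Set.Icc 1 (n - 1)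

theorem closure_artinGenerators : closure (artinGenerators n) = ⊤ := by
  refine top_unique ((PresentedGroup.closure_range_of (braidRels n)).symm.le.trans ?_)
  refine closure_mono (Set.range_subset_iff.2 fun j => ⟨j + 1, ⟨by omega, by omega⟩, ?_⟩)
  rw [σ_eq_of (by omega) (by omega)]
  congr

theorem abelianization_of_σ {i : ℕ} (hi : 1 ≤ i) (hin : i < n) :
    Abelianization.of (σ i : BraidGroup n) = Abelianization.of (σ 1) := by
  induction i, hi using Nat.le_induction with
  | base => rfl
  | succ i hi ih =>
    have h := congrArg Abelianization.of (σ_braid hi hin)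
    simp only [map_mul] at h
    rw [mul_comm (Abelianization.of (σ (i + 1))) (Abelianization.of (σ i))] at h
    rw [← ih (by omega)]
    exact (mul_left_cancel h).symm

theorem σ_one_conj_mem (hn : 5 ≤ n) {a : BraidGroup n} (ha : a ∈ artinGenerators n) :
    σ 1 * a * (σ 1)⁻¹ / σ 1 ∈ closure (artinGenerators n / artinGenerators n) ∧
      (σ 1)⁻¹ * a ∈ closure (artinGenerators n / artinGenerators n) := by
  obtain ⟨i, ⟨hi, hin⟩, rfl⟩ := ha
  have mem {j : ℕ} (hj : 1 ≤ j) (hjn : j ≤ n - 1) : σ j ∈ artinGenerators n := ⟨j, ⟨hj, hjn⟩, rfl⟩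
  by_cases h2 : i = 2
  · subst h2
    have h41 := (commute_σ le_rfl (by omega) (by omega) : Commute (σ 1 : BraidGroup n) (σ 4)).symm
    have h42 := (commute_σ (by omega) le_rfl (by omega) : Commute (σ 2 : BraidGroup n) (σ 4)).symm
    exact ⟨conj_div_mem_closure_div_self_of_braid (mem le_rfl (by omega)) (mem hi hin)
        (mem (by omega) (by omega)) h41 h42 (σ_braid le_rfl (by omega)),
      inv_mul_mem_closure_div_self_of_commute (mem le_rfl (by omega)) (mem hi hin)
        (mem (by omega) (by omega)) h41 h42⟩
  · have hc : Commute (σ 1 : BraidGroup n) (σ i) := by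
      rcases (by omega : i = 1 ∨ 3 ≤ i) with rfl | h3
      · exact Commute.refl _
      · exact commute_σ le_rfl h3 (by omega)
    rw [hc.eq, mul_inv_cancel_right, hc.inv_left.eq, ← div_eq_mul_inv]
    exact ⟨div_mem_closure_div_self (mem hi hin) (mem le_rfl (by omega)),
      div_mem_closure_div_self (mem hi hin) (mem le_rfl (by omega))⟩

theorem setOf_σ_mul_inv_eq : {x : BraidGroup n |
    ∃ i j, 1 ≤ i ∧ i ≤ n - 1 ∧ 1 ≤ j ∧ j ≤ n - 1 ∧ x = σ i * (σ j)⁻¹} =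
      artinGenerators n / artinGenerators n := by
  ext x
  constructor
  · rintro ⟨i, j, hi, hin, hj, hjn, rfl⟩
    exact ⟨_, ⟨i, ⟨hi, hin⟩, rfl⟩, _, ⟨j, ⟨hj, hjn⟩, rfl⟩, div_eq_mul_inv _ _⟩
  · rintro ⟨_, ⟨i, ⟨hi, hin⟩, rfl⟩, _, ⟨j, ⟨hj, hjn⟩, rfl⟩, rfl⟩
    exact ⟨i, j, hi, hin, hj, hjn, div_eq_mul_inv _ _⟩

end BraidGroup

theorem closure_sigma_diffs_normal (n : ℕ) (hn : 6 ≤ n) :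
    (Subgroup.closure {x : BraidGroup n |
        ∃ i j, 1 ≤ i ∧ i ≤ n - 1 ∧ 1 ≤ j ∧ j ≤ n - 1 ∧ x = σ i * (σ j)⁻¹}).Normal ∧
      Subgroup.closure {x : BraidGroup n |
        ∃ i j, 1 ≤ i ∧ i ≤ n - 1 ∧ 1 ≤ j ∧ j ≤ n - 1 ∧ x = σ i * (σ j)⁻¹} =
        commutator (BraidGroup n) := by
  rw [BraidGroup.setOf_σ_mul_inv_eq]
  have hc : σ 1 ∈ BraidGroup.artinGenerators n := ⟨1, ⟨le_rfl, by omega⟩, rfl⟩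
  have hN := Subgroup.closure_div_self_normal BraidGroup.closure_artinGenerators hc
    (fun _ ha => (BraidGroup.σ_one_conj_mem (by omega) ha).1)
    (fun _ ha => (BraidGroup.σ_one_conj_mem (by omega) ha).2)
  refine ⟨hN, le_antisymm (Subgroup.closure_div_self_le_commutator ?_)
    (Subgroup.commutator_le_closure_div_self BraidGroup.closure_artinGenerators hc)⟩
  rintro _ ⟨i, ⟨hi, hin⟩, rfl⟩ _ ⟨j, ⟨hj, hjn⟩, rfl⟩
  rw [BraidGroup.abelianization_of_σ hi (by omega), BraidGroup.abelianization_of_σ hj (by omega)]
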